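/- arXiv:1107.2448 — 4 statements merged into one kernel-verified Lean document; each statement's English description precedes it below -/
import Mathlib

section
/- Let n ≥ 2 and 1 < p ≤ 2, and set p' = p/(p−1). Let σ̃ be a nonnegative Borel measure on ℝ^n satisfying the discrete Carleson condition: there is A > 0 such that Σ_{Q ⊂ P, Q ∈ 𝒬} c_Q · σ̃(Q ∩ E)^{p'} ≤ A · σ̃(P ∩ E) for every dyadic cube P ∈ 𝒬 and every compact set E ⊂ ℝ^n. Then there exists a constant C = C(n,p,A) > 0 such that for every nonnegative sequence {λ_Q}_{Q∈𝒬} indexed by dyadic cubes and every dyadic cube P ∈ 𝒬: ∫_P { Σ_{Q ∈ 𝒬, x ∈ Q ⊂ P} c_Q · λ_Q^{1/(p−1)} }^{p−1} dσ̃(x) ≥ C · Σ_{Q ⊂ P} c_Q · σ̃(Q)^{1/(p−1)} · λ_Q. -/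
open MeasureTheory Metric Set ENNReal

noncomputable section

/-- A dyadic cube `∏ᵢ [2^k mᵢ, 2^k (mᵢ+1))` in `ℝⁿ`, recorded by its scale `k` and corner `m`. -/
structure DyadicCube (n : ℕ) where
  k : ℤ
  m : Fin n → ℤ

/-- The carrier set of a dyadic cube. -/
def DyadicCube.set {n : ℕ} (Q : DyadicCube n) : Set (EuclideanSpace ℝ (Fin n)) :=
  {x | ∀ i : Fin n, (2 : ℝ) ^ Q.k * (Q.m i : ℝ) ≤ x i ∧ x i < (2 : ℝ) ^ Q.k * ((Q.m i : ℝ) + 1)}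

/-- The side length `ℓ(Q) = 2^k` of a dyadic cube. -/
def DyadicCube.len {n : ℕ} (Q : DyadicCube n) : ℝ := (2 : ℝ) ^ Q.k

/-- The coefficient `c_Q = ℓ(Q)^{(p−n)/(p−1)}`. -/
def cQ {n : ℕ} (p : ℝ) (Q : DyadicCube n) : ℝ := Q.len ^ ((p - (n : ℝ)) / (p - 1))

/-- The discrete Carleson condition, localized to compact sets:
`Σ_{Q ⊆ P} c_Q σ(Q ∩ E)^{p'} ≤ A · σ(P ∩ E)` for all dyadic `P` and compact `E`. -/
def DiscCarlE {n : ℕ} (p : ℝ) (σ : Measure (EuclideanSpace ℝ (Fin n))) (A : ℝ) : Prop :=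
  ∀ (P : DyadicCube n) (E : Set (EuclideanSpace ℝ (Fin n))), IsCompact E →
    (∑' Q : {Q : DyadicCube n // Q.set ⊆ P.set},
        ENNReal.ofReal (cQ p Q.1) * σ (Q.1.set ∩ E) ^ (p / (p - 1)))
      ≤ ENNReal.ofReal A * σ (P.set ∩ E)

/-!
Write `r = p - 1 ∈ (0, 1]`, `g(Q) = c_Q λ_Q^{1/r}`, `U(Q) = ∑_{Q ⊆ R ⊆ P} g(R)` and
`T = ∑_{Q ⊆ P} g(Q) U(Q)^{r-1} σ(Q)`. The cubes of `P` containing a point `x` form a chain,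
along which concavity of `t ↦ t^r` telescopes to `r ∑_{x ∈ Q} g(Q) U(Q)^{r-1} ≤ W(x)^r`, where
`W(x) = ∑_{x ∈ Q ⊆ P} g(Q)`; integrating over `P` gives `r T ≤ ∫_P W^r dσ`. Telescoping the other
way along the chain above `Q` gives `U(Q)^r ≤ ∑_{Q ⊆ R ⊆ P} g(R) U(R)^{r-1}`, and after exchanging
the sums the Carleson condition yields `∑_Q c_Q σ(Q)^{p'} U(Q)^r ≤ A T`. Hölder's inequality with
exponents `1/r` and `1/(1-r)` then bounds `∑_Q c_Q σ(Q)^{1/r} λ_Q` by `T^r (A T)^{1-r} = A^{2-p} T`,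
so `C = (p - 1) / A^{2-p}` works. The Carleson condition, stated for compact sets, passes to cubes
by inner exhaustion, and unbounded `λ` is handled by monotone convergence.
-/

open NNReal

namespace ENNReal

theorem rpow_add_le_rpow_add_mul_rpow_sub_one {y d : ℝ≥0∞} (hy : y ≠ ∞) (hd : d ≠ ∞)
    {r : ℝ} (hr0 : 0 < r) (hr1 : r ≤ 1) :
    (y + d) ^ r ≤ y ^ r + d * (y + d) ^ (r - 1) := by
  lift y to ℝ≥0 using hy
  lift d to ℝ≥0 using hd
  rcases eq_or_ne (y + d) 0 with h0 | h0
  · simp [add_eq_zero.1 h0, zero_rpow_of_pos hr0]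
  rw [← coe_add, ← coe_rpow_of_nonneg _ hr0.le, ← coe_rpow_of_nonneg _ hr0.le,
    ← coe_rpow_of_ne_zero h0]
  norm_cast
  have hy_mul : y * (y + d) ^ (r - 1) ≤ y ^ r := by
    rcases eq_or_ne y 0 with hy0 | hy0
    · simp [hy0]
    calc y * (y + d) ^ (r - 1) ≤ y * y ^ (r - 1) := mul_le_mul_right
          (NNReal.rpow_le_rpow_of_nonpos (pos_iff_ne_zero.2 hy0) le_self_add (sub_nonpos.2 hr1)) y
      _ = y ^ r := by rw [NNReal.rpow_sub_one hy0, mul_div_cancel₀ _ hy0]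
  calc (y + d) ^ r = y * (y + d) ^ (r - 1) + d * (y + d) ^ (r - 1) := by
        rw [← add_mul, NNReal.rpow_sub_one h0, mul_div_cancel₀ _ h0]
    _ ≤ y ^ r + d * (y + d) ^ (r - 1) := by gcongr

theorem rpow_add_ofReal_mul_le_rpow_add {y d : ℝ≥0∞} (hy : y ≠ ∞) (hd : d ≠ ∞)
    {r : ℝ} (hr0 : 0 < r) (hr1 : r ≤ 1) :
    y ^ r + ENNReal.ofReal r * (d * (y + d) ^ (r - 1)) ≤ (y + d) ^ r := by
  lift y to ℝ≥0 using hy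
  lift d to ℝ≥0 using hd
  rcases eq_or_ne (y + d) 0 with h0 | h0
  · simp [add_eq_zero.1 h0, zero_rpow_of_pos hr0]
  rw [← coe_add, ← coe_rpow_of_nonneg _ hr0.le, ← coe_rpow_of_nonneg _ hr0.le,
    ← coe_rpow_of_ne_zero h0, ENNReal.ofReal]
  norm_cast
  rw [← NNReal.coe_le_coe]
  push_cast
  rw [Real.coe_toNNReal _ hr0.le]
  have hX : (0 : ℝ) < y + d := by exact_mod_cast pos_iff_ne_zero.2 h0
  -- Bernoulli's inequality `(1 + s) ^ r ≤ 1 + r s` at `1 + s = y / (y + d)`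
  have h := rpow_one_add_le_one_add_mul_self (s := -(d / (y + d) : ℝ))
    (by rw [neg_le_neg_iff, div_le_one hX]; simp) hr0.le hr1
  rw [show 1 + -(d / (y + d) : ℝ) = y / (y + d) by field_simp; ring,
    Real.div_rpow y.coe_nonneg hX.le, div_le_iff₀ (Real.rpow_pos_of_pos hX r)] at h
  rw [Real.rpow_sub_one hX.ne']
  linarith [show (1 + r * -(d / (y + d) : ℝ)) * (y + d) ^ r
    = (y + d) ^ r - r * (d * ((y + d) ^ r / (y + d))) by ring]

theorem rpow_sum_range_le_sum_mul_rpow {a : ℕ → ℝ≥0∞} (ha : ∀ j, a j ≠ ∞) {r : ℝ}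
    (hr0 : 0 < r) (hr1 : r ≤ 1) (N : ℕ) :
    (∑ i ∈ Finset.range N, a i) ^ r
      ≤ ∑ j ∈ Finset.range N, a j * (∑ i ∈ Finset.range (j + 1), a i) ^ (r - 1) := by
  induction N with
  | zero => simp [zero_rpow_of_pos hr0]
  | succ N ih =>
    rw [Finset.sum_range_succ (fun j => a j * _), Finset.sum_range_succ]
    calc (∑ i ∈ Finset.range N, a i + a N) ^ r
        ≤ (∑ i ∈ Finset.range N, a i) ^ r + a N * (∑ i ∈ Finset.range N, a i + a N) ^ (r - 1) :=
          rpow_add_le_rpow_add_mul_rpow_sub_one (sum_ne_top.2 fun i _ => ha i) (ha N) hr0 hr1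
      _ ≤ _ := by rw [← Finset.sum_range_succ]; gcongr

theorem ofReal_mul_tsum_mul_rpow_le_rpow_tsum (a : ℕ → ℝ≥0∞) {r : ℝ} (hr0 : 0 < r)
    (hr1 : r ≤ 1) :
    ENNReal.ofReal r * ∑' j, a j * (∑ i ∈ Finset.range (j + 1), a i) ^ (r - 1)
      ≤ (∑' j, a j) ^ r := by
  by_cases htop : ∑' j, a j = ∞
  · simp [htop, top_rpow_of_pos hr0]
  have ha : ∀ j, a j ≠ ∞ := fun j => ne_top_of_le_ne_top htop (ENNReal.le_tsum j)
  have hpartial : ∀ N, ENNReal.ofReal r *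
      ∑ j ∈ Finset.range N, a j * (∑ i ∈ Finset.range (j + 1), a i) ^ (r - 1)
        ≤ (∑ i ∈ Finset.range N, a i) ^ r := by
    intro N
    induction N with
    | zero => simp
    | succ N ih =>
      rw [Finset.sum_range_succ, mul_add, Finset.sum_range_succ a N]
      calc _ ≤ (∑ i ∈ Finset.range N, a i) ^ r
            + ENNReal.ofReal r * (a N * (∑ i ∈ Finset.range N, a i + a N) ^ (r - 1)) := by
            rw [← Finset.sum_range_succ]; gcongr
        _ ≤ _ := rpow_add_ofReal_mul_le_rpow_add (sum_ne_top.2 fun i _ => ha i) (ha N) hr0 hr1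
  rw [ENNReal.tsum_eq_iSup_nat, ENNReal.mul_iSup]
  exact iSup_le fun N => (hpartial N).trans
    (rpow_le_rpow (ENNReal.sum_le_tsum _) hr0.le)

theorem tsum_rpow_mul_rpow_le {ι : Type*} (f g : ι → ℝ≥0∞) {r : ℝ} (hr0 : 0 ≤ r)
    (hr1 : r ≤ 1) :
    ∑' i, f i ^ r * g i ^ (1 - r) ≤ (∑' i, f i) ^ r * (∑' i, g i) ^ (1 - r) := by
  rcases hr0.eq_or_lt with rfl | hr0
  · simp
  rcases hr1.eq_or_lt with rfl | hr1
  · simp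
  let _ : MeasurableSpace ι := ⊤
  have hpq : (1 / r).HolderConjugate (1 / (1 - r)) := by
    rw [Real.holderConjugate_iff]
    constructor
    · rw [lt_div_iff₀ hr0]; linarith
    · simp
  have := lintegral_mul_le_Lp_mul_Lq Measure.count hpq (f := fun i => f i ^ r)
    (g := fun i => g i ^ (1 - r)) measurable_from_top.aemeasurable
    measurable_from_top.aemeasurable
  simpa only [lintegral_count, ← rpow_mul, one_div_one_div, mul_one_div_cancel hr0.ne',
    mul_one_div_cancel (sub_pos.2 hr1).ne', rpow_one, Pi.mul_apply] using this

theorem tsum_iSup_eq_iSup_tsum {ι : Type*} {f : ℕ → ι → ℝ≥0∞} (hf : Monotone f) :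
    ∑' i, ⨆ m, f m i = ⨆ m, ∑' i, f m i := by
  let _ : MeasurableSpace ι := ⊤
  simpa only [lintegral_count] using
    lintegral_iSup (μ := Measure.count) (fun m => measurable_from_top) hf

theorem tsum_tsum_subtype_comm {α β : Type*} (r : α → β → Prop) (f : α → β → ℝ≥0∞) :
    ∑' a, ∑' b : {b // r a b}, f a b = ∑' b, ∑' a : {a // r a b}, f a b := by
  calc ∑' a, ∑' b : {b // r a b}, f a b = ∑' a, ∑' b, {b | r a b}.indicator (f a) b :=
        tsum_congr fun a => tsum_subtype {b | r a b} (f a)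
    _ = ∑' b, ∑' a, {a | r a b}.indicator (fun a => f a b) a := ENNReal.tsum_comm
    _ = _ := tsum_congr fun b => (tsum_subtype {a | r a b} (fun a => f a b)).symm

theorem iSup_rpow {ι : Type*} (x : ι → ℝ≥0∞) {q : ℝ} (hq : 0 < q) :
    (⨆ i, x i) ^ q = ⨆ i, x i ^ q :=
  (ENNReal.orderIsoRpow q hq).map_iSup x

end ENNReal

-- The splitting of a term `c_Q σ(Q)^{1/r} λ_Q` (with `U = U(Q)`) to which Hölder's inequality is
-- applied.
theorem mul_rpow_mul_eq_rpow_mul_rpow {p : ℝ} (hp1 : 1 < p) (hp2 : p ≤ 2) {c s L U : ℝ≥0∞}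
    (hc0 : c ≠ 0) (hc : c ≠ ∞) (hL : L ≠ ∞) (hU : U ≠ ∞) (hLU : c * L ^ (1 / (p - 1)) ≤ U) :
    c * s ^ (1 / (p - 1)) * L
      = (c * L ^ (1 / (p - 1)) * U ^ (p - 1 - 1) * s) ^ (p - 1)
        * (c * s ^ (p / (p - 1)) * U ^ (p - 1)) ^ (1 - (p - 1)) := by
  have hr0 : 0 < p - 1 := by linarith
  have hq0 : 0 < 1 / (p - 1) := by positivity
  have hp0 : 0 < p / (p - 1) := by positivity
  have hr1 : 0 ≤ 1 - (p - 1) := by linarith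
  rcases eq_or_ne L 0 with rfl | hL0
  · simp only [ENNReal.zero_rpow_of_pos hq0, mul_zero, zero_mul, ENNReal.zero_rpow_of_pos hr0]
  have hg0 : c * L ^ (1 / (p - 1)) ≠ 0 :=
    mul_ne_zero hc0 (ENNReal.rpow_pos (pos_iff_ne_zero.2 hL0) hL).ne'
  have hU0 : U ≠ 0 := (pos_iff_ne_zero.2 hg0 |>.trans_le hLU).ne'
  have hUpow : ∀ t : ℝ, U ^ t ≠ 0 := fun t => (ENNReal.rpow_pos (pos_iff_ne_zero.2 hU0) hU).ne'
  rcases eq_or_ne s 0 with rfl | hs0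
  · simp only [ENNReal.zero_rpow_of_pos hq0, ENNReal.zero_rpow_of_pos hp0, mul_zero, zero_mul,
      ENNReal.zero_rpow_of_pos hr0]
  rcases eq_or_ne s ∞ with rfl | hs
  · have htop : (∞ : ℝ≥0∞) ^ (1 - (p - 1)) ≠ 0 := by
      simp [ENNReal.rpow_eq_zero_iff]; linarith
    rw [ENNReal.top_rpow_of_pos hq0, ENNReal.top_rpow_of_pos hp0, ENNReal.mul_top hc0,
      ENNReal.top_mul hL0, ENNReal.mul_top (mul_ne_zero hg0 (hUpow _)),
      ENNReal.top_rpow_of_pos hr0, ENNReal.top_mul (hUpow _), ENNReal.top_mul htop]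
  -- all factors lie in `(0, ∞)`: compare exponents of `c`, `s`, `U` and `L`
  have hc' : c ^ (p - 1) * c ^ (1 - (p - 1)) = c := by
    rw [← ENNReal.rpow_add _ _ hc0 hc, add_sub_cancel, ENNReal.rpow_one]
  have hs' : s ^ (p - 1) * s ^ (p / (p - 1) * (1 - (p - 1))) = s ^ (1 / (p - 1)) := by
    rw [← ENNReal.rpow_add _ _ hs0 hs]
    congr 1
    field_simp
    ring
  have hU' : U ^ ((p - 1 - 1) * (p - 1)) * U ^ ((p - 1) * (1 - (p - 1))) = 1 := by
    rw [← ENNReal.rpow_add _ _ hU0 hU, ← ENNReal.rpow_zero (x := U)]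
    ring_nf
  symm
  calc (c * L ^ (1 / (p - 1)) * U ^ (p - 1 - 1) * s) ^ (p - 1)
        * (c * s ^ (p / (p - 1)) * U ^ (p - 1)) ^ (1 - (p - 1))
      = (c ^ (p - 1) * c ^ (1 - (p - 1)))
          * ((s ^ (p - 1) * s ^ (p / (p - 1) * (1 - (p - 1))))
            * ((U ^ ((p - 1 - 1) * (p - 1)) * U ^ ((p - 1) * (1 - (p - 1)))) * L)) := by
        rw [ENNReal.mul_rpow_of_nonneg _ s hr0.le,
          ENNReal.mul_rpow_of_nonneg _ (U ^ (p - 1 - 1)) hr0.le,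
          ENNReal.mul_rpow_of_nonneg c _ hr0.le,
          ENNReal.mul_rpow_of_nonneg _ (U ^ (p - 1)) hr1,
          ENNReal.mul_rpow_of_nonneg c _ hr1,
          ← ENNReal.rpow_mul L, ← ENNReal.rpow_mul U, ← ENNReal.rpow_mul s,
          ← ENNReal.rpow_mul U, one_div_mul_cancel hr0.ne', ENNReal.rpow_one]
        ring
    _ = c * s ^ (1 / (p - 1)) * L := by
        rw [hc', hs', hU']
        ring

theorem Int.floor_div_two_zpow_of_le {k K : ℤ} (hkK : k ≤ K) (t : ℝ) :
    ⌊t / 2 ^ K⌋ = ⌊t / 2 ^ k⌋ / 2 ^ (K - k).toNat := by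
  have h : (2 : ℝ) ^ K = 2 ^ k * ((2 ^ (K - k).toNat : ℕ) : ℝ) := by
    rw [Nat.cast_pow, Nat.cast_two, ← zpow_natCast, Int.toNat_of_nonneg (by omega),
      ← zpow_add₀ two_ne_zero, add_sub_cancel]
  rw [h, ← div_div, Int.floor_div_natCast]
  norm_cast

namespace DyadicCube

variable {n : ℕ} {Q R P : DyadicCube n} {x y : EuclideanSpace ℝ (Fin n)} {k K : ℤ}

theorem mem_set_iff : x ∈ Q.set ↔ ∀ i, ⌊x i / 2 ^ Q.k⌋ = Q.m i := by
  have h2 : (0 : ℝ) < 2 ^ Q.k := zpow_pos two_pos _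
  simp only [DyadicCube.set, Set.mem_ofPred_eq, Int.floor_eq_iff, le_div_iff₀ h2, div_lt_iff₀ h2,
    mul_comm]

def ofScale (x : EuclideanSpace ℝ (Fin n)) (k : ℤ) : DyadicCube n := ⟨k, fun i => ⌊x i / 2 ^ k⌋⟩

@[simp] theorem ofScale_k : (ofScale x k).k = k := rfl

theorem mem_ofScale : x ∈ (ofScale x k).set := mem_set_iff.2 fun _ => rfl

theorem ofScale_eq_of_mem (hx : x ∈ Q.set) : ofScale x Q.k = Q := by
  obtain ⟨k, m⟩ := Q
  simp only [ofScale, mk.injEq, true_and]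
  exact funext (mem_set_iff.1 hx)

theorem ofScale_eq_ofScale (hkK : k ≤ K) (hy : y ∈ (ofScale x k).set) :
    ofScale y K = ofScale x K := by
  have hy' := mem_set_iff.1 hy
  simp only [ofScale, mk.injEq, true_and]
  funext i
  rw [Int.floor_div_two_zpow_of_le hkK, Int.floor_div_two_zpow_of_le hkK]
  exact congrArg (· / _) (hy' i)

theorem set_subset_of_mem (hk : Q.k ≤ R.k) (hxQ : x ∈ Q.set) (hxR : x ∈ R.set) :
    Q.set ⊆ R.set := fun y hy => by
  rw [← ofScale_eq_of_mem hxR, ← ofScale_eq_ofScale hk (ofScale_eq_of_mem hxQ ▸ hy)]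
  exact mem_ofScale

def corner (Q : DyadicCube n) : EuclideanSpace ℝ (Fin n) :=
  WithLp.toLp 2 fun i => 2 ^ Q.k * (Q.m i : ℝ)

theorem corner_mem : Q.corner ∈ Q.set := mem_set_iff.2 fun i => by
  simp [corner, mul_div_cancel_left₀ _ (zpow_ne_zero Q.k (two_ne_zero' ℝ))]

theorem k_le_of_set_subset (hn : 0 < n) (h : Q.set ⊆ R.set) : Q.k ≤ R.k := by
  by_contra! hlt
  let i₀ : Fin n := ⟨0, hn⟩
  -- shifting the corner of `Q` by the side length of `R` stays in `Q` but leaves `R`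
  have hshift : Q.corner + PiLp.single 2 i₀ ((2 : ℝ) ^ R.k) ∈ Q.set := by
    intro i
    by_cases hi : i = i₀
    · subst hi
      have hRQ : (2 : ℝ) ^ R.k < 2 ^ Q.k := zpow_lt_zpow_right₀ one_lt_two hlt
      simp only [corner, PiLp.add_apply, PiLp.single_apply, if_true]
      constructor <;> nlinarith [zpow_pos (two_pos (α := ℝ)) R.k]
    · simpa [hi] using corner_mem (Q := Q) i
  have h₁ := mem_set_iff.1 (h corner_mem) i₀
  have h₂ := mem_set_iff.1 (h hshift) i₀
  simp only [PiLp.add_apply, PiLp.single_apply, if_true, add_div,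
    div_self (zpow_ne_zero R.k (two_ne_zero' ℝ)), Int.floor_add_one] at h₂
  omega

instance : Countable (DyadicCube n) :=
  Function.Injective.countable (f := fun Q : DyadicCube n => (Q.k, Q.m))
    fun Q R h => by cases Q; cases R; simpa using h

theorem measurableSet_set (Q : DyadicCube n) : MeasurableSet Q.set := by
  have h : Q.set = ⋂ i, (fun x : EuclideanSpace ℝ (Fin n) => x i) ⁻¹'
      Set.Ico (2 ^ Q.k * (Q.m i : ℝ)) (2 ^ Q.k * ((Q.m i : ℝ) + 1)) := by
    ext x; simp [DyadicCube.set]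
  rw [h]
  exact MeasurableSet.iInter fun i =>
    (EuclideanSpace.proj i).continuous.measurable measurableSet_Ico

theorem isSigmaCompact_set (Q : DyadicCube n) : IsSigmaCompact Q.set := by
  refine ⟨fun j : ℕ => (EuclideanSpace.equiv (Fin n) ℝ) ⁻¹' Set.univ.pi fun i =>
      Set.Icc (2 ^ Q.k * (Q.m i : ℝ)) (2 ^ Q.k * ((Q.m i : ℝ) + 1) - 1 / (j + 1)),
    fun j => (EuclideanSpace.equiv (Fin n) ℝ).toHomeomorph.isCompact_preimage.2
      (isCompact_univ_pi fun i => isCompact_Icc), ?_⟩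
  ext x
  simp only [Set.mem_iUnion, Set.mem_preimage, Set.mem_univ_pi, Set.mem_Icc,
    PiLp.coe_continuousLinearEquiv]
  constructor
  · rintro ⟨j, hj⟩ i
    exact ⟨(hj i).1, (hj i).2.trans_lt (sub_lt_self _ (by positivity))⟩
  · intro hx
    obtain ⟨j, hj⟩ := (Filter.eventually_all.2 fun i =>
      tendsto_one_div_add_atTop_nhds_zero_nat.eventually (gt_mem_nhds (sub_pos.2 (hx i).2))).exists
    exact ⟨j, fun i => ⟨(hx i).1, by linarith [hj i]⟩⟩

def betweenEquiv (hn : 0 < n) (hQP : Q.set ⊆ P.set) (hx : x ∈ Q.set) :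
    Fin ((P.k - Q.k).toNat + 1) ≃ {R : DyadicCube n // Q.set ⊆ R.set ∧ R.set ⊆ P.set} where
  toFun j := ⟨ofScale x (P.k - j),
    set_subset_of_mem (by have := k_le_of_set_subset hn hQP; simp; omega) hx mem_ofScale,
    set_subset_of_mem (by simp) mem_ofScale (hQP hx)⟩
  invFun R := ⟨(P.k - R.1.k).toNat, by
    have := k_le_of_set_subset hn R.2.1; have := k_le_of_set_subset hn R.2.2; omega⟩
  left_inv j := by ext; simp
  right_inv R := by
    have := k_le_of_set_subset hn R.2.2
    refine Subtype.ext ?_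
    simp only
    rw [show P.k - ((P.k - R.1.k).toNat : ℕ) = R.1.k by omega]
    exact ofScale_eq_of_mem (R.2.1 hx)

def chainEquiv (hn : 0 < n) (hx : x ∈ P.set) :
    ℕ ≃ {Q : DyadicCube n // x ∈ Q.set ∧ Q.set ⊆ P.set} where
  toFun j := ⟨ofScale x (P.k - j), mem_ofScale, set_subset_of_mem (by simp) mem_ofScale hx⟩
  invFun Q := (P.k - Q.1.k).toNat
  left_inv j := by simp
  right_inv Q := by
    have := k_le_of_set_subset hn Q.2.2
    refine Subtype.ext ?_
    simp only
    rw [show P.k - ((P.k - Q.1.k).toNat : ℕ) = Q.1.k by omega]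
    exact ofScale_eq_of_mem Q.2.1

theorem tsum_chain_eq (hn : 0 < n) (hx : x ∈ P.set) (f : DyadicCube n → ℝ≥0∞) :
    ∑' Q : {Q : DyadicCube n // x ∈ Q.set ∧ Q.set ⊆ P.set}, f Q
      = ∑' j : ℕ, f (ofScale x (P.k - j)) :=
  ((chainEquiv hn hx).tsum_eq fun Q => f Q.1).symm

def ancestorSum (P : DyadicCube n) (g : DyadicCube n → ℝ≥0∞) (Q : DyadicCube n) : ℝ≥0∞ :=
  ∑' R : {R : DyadicCube n // Q.set ⊆ R.set ∧ R.set ⊆ P.set}, g R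

theorem ancestorSum_eq_sum_range (hn : 0 < n) (hQP : Q.set ⊆ P.set) (hx : x ∈ Q.set)
    (g : DyadicCube n → ℝ≥0∞) :
    ancestorSum P g Q = ∑ j ∈ Finset.range ((P.k - Q.k).toNat + 1), g (ofScale x (P.k - j)) := by
  rw [ancestorSum, ← (betweenEquiv hn hQP hx).tsum_eq, tsum_fintype]
  exact Fin.sum_univ_eq_sum_range (fun j => g (ofScale x (P.k - j))) _

theorem ancestorSum_ofScale (hn : 0 < n) (hx : x ∈ P.set) (g : DyadicCube n → ℝ≥0∞) (j : ℕ) :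
    ancestorSum P g (ofScale x (P.k - j))
      = ∑ i ∈ Finset.range (j + 1), g (ofScale x (P.k - i)) := by
  rw [ancestorSum_eq_sum_range hn (set_subset_of_mem (by simp) mem_ofScale hx) mem_ofScale,
    ofScale_k, show (P.k - (P.k - j)).toNat = j by omega]

theorem le_ancestorSum (hQP : Q.set ⊆ P.set) (g : DyadicCube n → ℝ≥0∞) :
    g Q ≤ ancestorSum P g Q :=
  ENNReal.le_tsum (f := fun R : {R : DyadicCube n // Q.set ⊆ R.set ∧ R.set ⊆ P.set} => g R)
    ⟨Q, subset_rfl, hQP⟩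

theorem ancestorSum_ne_top (hn : 0 < n) (hQP : Q.set ⊆ P.set) {g : DyadicCube n → ℝ≥0∞}
    (hg : ∀ R, g R ≠ ∞) : ancestorSum P g Q ≠ ∞ := by
  rw [ancestorSum_eq_sum_range hn hQP corner_mem]
  exact ENNReal.sum_ne_top.2 fun j _ => hg _

theorem tsum_mul_ancestorSum (P : DyadicCube n) (w h : DyadicCube n → ℝ≥0∞) :
    ∑' Q : {Q : DyadicCube n // Q.set ⊆ P.set}, w Q * ancestorSum P h Q
      = ∑' R : {R : DyadicCube n // R.set ⊆ P.set},
          h R * ∑' Q : {Q : DyadicCube n // Q.set ⊆ R.1.set}, w Q := by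
  have hanc : ∀ Q : DyadicCube n, ancestorSum P h Q
      = ∑' R : {R : {R : DyadicCube n // R.set ⊆ P.set} // Q.set ⊆ R.1.set}, h R.1.1 := fun Q =>
    ((Equiv.subtypeSubtypeEquivSubtypeInter _ _).trans
      (Equiv.subtypeEquivRight fun _ => and_comm)).tsum_eq (fun R => h R.1) |>.symm
  have hdesc : ∀ R : {R : DyadicCube n // R.set ⊆ P.set},
      ∑' Q : {Q : DyadicCube n // Q.set ⊆ R.1.set}, w Q
        = ∑' Q : {Q : {Q : DyadicCube n // Q.set ⊆ P.set} // Q.1.set ⊆ R.1.set}, w Q.1.1 :=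
    fun R => ((Equiv.subtypeSubtypeEquivSubtype fun hQ => hQ.trans R.2).tsum_eq
      (fun Q => w Q.1)).symm
  simp only [hanc, hdesc, ← ENNReal.tsum_mul_left]
  rw [ENNReal.tsum_tsum_subtype_comm (fun Q R : {R : DyadicCube n // R.set ⊆ P.set} =>
    Q.1.set ⊆ R.1.set) fun Q R => w Q * h R]
  simp only [mul_comm]

theorem tsum_mul_measure_eq_setLIntegral (σ : Measure (EuclideanSpace ℝ (Fin n)))
    (P : DyadicCube n) (h : DyadicCube n → ℝ≥0∞) :
    ∑' Q : {Q : DyadicCube n // Q.set ⊆ P.set}, h Q * σ Q.1.set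
      = ∫⁻ x in P.set, ∑' Q : {Q : DyadicCube n // x ∈ Q.set ∧ Q.set ⊆ P.set}, h Q ∂σ := by
  have hchain : ∀ x, ∑' Q : {Q : DyadicCube n // x ∈ Q.set ∧ Q.set ⊆ P.set}, h Q
      = ∑' Q : {Q : DyadicCube n // Q.set ⊆ P.set}, Q.1.set.indicator (fun _ => h Q) x := by
    intro x
    exact (((Equiv.subtypeSubtypeEquivSubtypeInter _ _).trans
      (Equiv.subtypeEquivRight fun _ => and_comm)).tsum_eq (fun Q => h Q.1)).symm.trans
      (tsum_subtype {Q : {Q : DyadicCube n // Q.set ⊆ P.set} | x ∈ Q.1.set} fun Q => h Q.1)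
  simp only [hchain]
  rw [lintegral_tsum fun Q => (measurable_const.indicator (measurableSet_set _)).aemeasurable]
  refine tsum_congr fun Q => ?_
  rw [lintegral_indicator_const (measurableSet_set _), Measure.restrict_apply (measurableSet_set _),
    Set.inter_eq_left.2 Q.2]

theorem ofReal_mul_tsum_ancestorSum_le_lintegral (hn : 0 < n)
    (σ : Measure (EuclideanSpace ℝ (Fin n))) (P : DyadicCube n) (g : DyadicCube n → ℝ≥0∞)
    {r : ℝ} (hr0 : 0 < r) (hr1 : r ≤ 1) :
    ENNReal.ofReal r * ∑' Q : {Q : DyadicCube n // Q.set ⊆ P.set},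
        g Q * ancestorSum P g Q ^ (r - 1) * σ Q.1.set
      ≤ ∫⁻ x in P.set, (∑' Q : {Q : DyadicCube n // x ∈ Q.set ∧ Q.set ⊆ P.set}, g Q) ^ r ∂σ := by
  rw [tsum_mul_measure_eq_setLIntegral σ P fun Q => g Q * ancestorSum P g Q ^ (r - 1),
    ← lintegral_const_mul' _ _ ENNReal.ofReal_ne_top]
  refine setLIntegral_mono' (measurableSet_set P) fun x hx => ?_
  rw [tsum_chain_eq hn hx g, tsum_chain_eq hn hx fun Q => g Q * ancestorSum P g Q ^ (r - 1)]
  simp only [ancestorSum_ofScale hn hx]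
  exact ENNReal.ofReal_mul_tsum_mul_rpow_le_rpow_tsum _ hr0 hr1

theorem tsum_mul_rpow_ancestorSum_le (hn : 0 < n) (P : DyadicCube n) {g : DyadicCube n → ℝ≥0∞}
    (hg : ∀ R, g R ≠ ∞) {r : ℝ} (hr0 : 0 < r) (hr1 : r ≤ 1) {w ν : DyadicCube n → ℝ≥0∞}
    {B : ℝ≥0∞} (hw : ∀ R : DyadicCube n, R.set ⊆ P.set →
      ∑' Q : {Q : DyadicCube n // Q.set ⊆ R.set}, w Q ≤ B * ν R) :
    ∑' Q : {Q : DyadicCube n // Q.set ⊆ P.set}, w Q * ancestorSum P g Q ^ r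
      ≤ B * ∑' Q : {Q : DyadicCube n // Q.set ⊆ P.set},
          g Q * ancestorSum P g Q ^ (r - 1) * ν Q := by
  have hU : ∀ Q : DyadicCube n, Q.set ⊆ P.set → ancestorSum P g Q ^ r
      ≤ ancestorSum P (fun R => g R * ancestorSum P g R ^ (r - 1)) Q := by
    intro Q hQP
    rw [ancestorSum_eq_sum_range hn hQP corner_mem, ancestorSum_eq_sum_range hn hQP corner_mem]
    simp only [ancestorSum_ofScale hn (hQP corner_mem)]
    exact ENNReal.rpow_sum_range_le_sum_mul_rpow (fun j => hg _) hr0 hr1 _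
  calc _ ≤ ∑' Q : {Q : DyadicCube n // Q.set ⊆ P.set},
        w Q * ancestorSum P (fun R => g R * ancestorSum P g R ^ (r - 1)) Q :=
        ENNReal.tsum_le_tsum fun Q => by gcongr; exact hU Q Q.2
    _ = ∑' R : {R : DyadicCube n // R.set ⊆ P.set}, g R * ancestorSum P g R ^ (r - 1)
        * ∑' Q : {Q : DyadicCube n // Q.set ⊆ R.1.set}, w Q := tsum_mul_ancestorSum P _ _
    _ ≤ ∑' R : {R : DyadicCube n // R.set ⊆ P.set}, g R * ancestorSum P g R ^ (r - 1)
        * (B * ν R) := ENNReal.tsum_le_tsum fun R => by gcongr; exact hw R R.2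
    _ = _ := by
        rw [← ENNReal.tsum_mul_left]
        exact tsum_congr fun R => by ring

end DyadicCube

theorem DiscCarlE.tsum_le_of_isSigmaCompact {n : ℕ} {p A : ℝ}
    {σ : Measure (EuclideanSpace ℝ (Fin n))} (hσ : DiscCarlE p σ A) (hp : 1 < p)
    (P : DyadicCube n) {S : Set (EuclideanSpace ℝ (Fin n))} (hS : IsSigmaCompact S) :
    ∑' Q : {Q : DyadicCube n // Q.set ⊆ P.set},
        ENNReal.ofReal (cQ p Q.1) * σ (Q.1.set ∩ S) ^ (p / (p - 1))
      ≤ ENNReal.ofReal A * σ (P.set ∩ S) := by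
  have hq : 0 < p / (p - 1) := div_pos (by linarith) (by linarith)
  obtain ⟨K, hK, rfl⟩ := hS
  have hsup : ∀ T, σ (T ∩ ⋃ j, K j) = ⨆ j, σ (T ∩ accumulate K j) := fun T => by
    rw [← iUnion_accumulate, inter_iUnion]
    exact Monotone.measure_iUnion fun i j hij =>
      inter_subset_inter_right T (monotone_accumulate hij)
  have hmono : Monotone fun j (Q : {Q : DyadicCube n // Q.set ⊆ P.set}) =>
      ENNReal.ofReal (cQ p Q.1) * σ (Q.1.set ∩ accumulate K j) ^ (p / (p - 1)) :=
    fun i j hij Q => by dsimp only; gcongr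
  calc _ = ∑' Q : {Q : DyadicCube n // Q.set ⊆ P.set},
        ⨆ j, ENNReal.ofReal (cQ p Q.1) * σ (Q.1.set ∩ accumulate K j) ^ (p / (p - 1)) := by
        simp only [hsup, ENNReal.iSup_rpow _ hq, ENNReal.mul_iSup]
    _ = ⨆ j, ∑' Q : {Q : DyadicCube n // Q.set ⊆ P.set},
        ENNReal.ofReal (cQ p Q.1) * σ (Q.1.set ∩ accumulate K j) ^ (p / (p - 1)) :=
        ENNReal.tsum_iSup_eq_iSup_tsum hmono
    _ ≤ ⨆ j, ENNReal.ofReal A * σ (P.set ∩ accumulate K j) :=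
        iSup_mono fun j => hσ P _ (isCompact_accumulate hK j)
    _ = _ := by rw [hsup, ENNReal.mul_iSup]

theorem DiscCarlE.tsum_le_measure_set {n : ℕ} {p A : ℝ}
    {σ : Measure (EuclideanSpace ℝ (Fin n))} (hσ : DiscCarlE p σ A) (hp : 1 < p)
    (P : DyadicCube n) :
    ∑' Q : {Q : DyadicCube n // Q.set ⊆ P.set},
        ENNReal.ofReal (cQ p Q.1) * σ Q.1.set ^ (p / (p - 1))
      ≤ ENNReal.ofReal A * σ P.set := by
  have := hσ.tsum_le_of_isSigmaCompact hp P P.isSigmaCompact_set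
  rwa [Set.inter_self, tsum_congr fun Q => by rw [Set.inter_eq_left.2 Q.2]] at this

theorem cQ_pos {n : ℕ} (p : ℝ) (Q : DyadicCube n) : 0 < cQ p Q :=
  Real.rpow_pos_of_pos (zpow_pos two_pos _) _

open DyadicCube in
theorem ofReal_mul_tsum_le_lintegral_of_ne_top {n : ℕ} (hn : 0 < n) {p A : ℝ} (hp1 : 1 < p)
    (hp2 : p ≤ 2) (hA : 0 < A) {σ : Measure (EuclideanSpace ℝ (Fin n))}
    (hσ : ∀ R : DyadicCube n, ∑' Q : {Q : DyadicCube n // Q.set ⊆ R.set},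
      ENNReal.ofReal (cQ p Q.1) * σ Q.1.set ^ (p / (p - 1)) ≤ ENNReal.ofReal A * σ R.set)
    {lam : DyadicCube n → ℝ≥0∞} (hlam : ∀ Q, lam Q ≠ ∞) (P : DyadicCube n) :
    ENNReal.ofReal ((p - 1) / A ^ (2 - p)) *
        ∑' Q : {Q : DyadicCube n // Q.set ⊆ P.set},
          ENNReal.ofReal (cQ p Q.1) * σ Q.1.set ^ (1 / (p - 1)) * lam Q.1
      ≤ ∫⁻ x in P.set,
          (∑' Q : {Q : DyadicCube n // x ∈ Q.set ∧ Q.set ⊆ P.set},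
            ENNReal.ofReal (cQ p Q.1) * lam Q.1 ^ (1 / (p - 1))) ^ (p - 1) ∂σ := by
  have hr0 : 0 < p - 1 := by linarith
  have hr1 : p - 1 ≤ 1 := by linarith
  have hr1' : 0 ≤ 1 - (p - 1) := by linarith
  set g : DyadicCube n → ℝ≥0∞ := fun Q => ENNReal.ofReal (cQ p Q) * lam Q ^ (1 / (p - 1))
  have hg : ∀ Q, g Q ≠ ∞ := fun Q => ENNReal.mul_ne_top ENNReal.ofReal_ne_top
    (ENNReal.rpow_ne_top_of_nonneg (by positivity) (hlam Q))
  set T := ∑' Q : {Q : DyadicCube n // Q.set ⊆ P.set},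
    g Q * ancestorSum P g Q ^ (p - 1 - 1) * σ Q.1.set
  have hholder : ∑' Q : {Q : DyadicCube n // Q.set ⊆ P.set},
        ENNReal.ofReal (cQ p Q.1) * σ Q.1.set ^ (1 / (p - 1)) * lam Q.1
      ≤ T ^ (p - 1) * (∑' Q : {Q : DyadicCube n // Q.set ⊆ P.set},
          ENNReal.ofReal (cQ p Q.1) * σ Q.1.set ^ (p / (p - 1)) * ancestorSum P g Q ^ (p - 1))
        ^ (1 - (p - 1)) := by
    refine (le_of_eq (tsum_congr fun Q => ?_)).trans (ENNReal.tsum_rpow_mul_rpow_le _ _ hr0.le hr1)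
    exact mul_rpow_mul_eq_rpow_mul_rpow hp1 hp2 (ENNReal.ofReal_pos.2 (cQ_pos p Q.1)).ne'
      ENNReal.ofReal_ne_top (hlam Q) (ancestorSum_ne_top hn Q.2 hg) (le_ancestorSum Q.2 g)
  have hcarleson := tsum_mul_rpow_ancestorSum_le hn P hg hr0 hr1
    (w := fun Q => ENNReal.ofReal (cQ p Q) * σ Q.set ^ (p / (p - 1))) (ν := fun R => σ R.set)
    fun R _ => hσ R
  have hconst : ENNReal.ofReal ((p - 1) / A ^ (2 - p)) * ENNReal.ofReal A ^ (1 - (p - 1))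
      = ENNReal.ofReal (p - 1) := by
    rw [show 1 - (p - 1) = 2 - p by ring, ENNReal.ofReal_rpow_of_pos hA,
      ← ENNReal.ofReal_mul (by positivity), div_mul_cancel₀ _ (Real.rpow_pos_of_pos hA _).ne']
  calc _ ≤ ENNReal.ofReal ((p - 1) / A ^ (2 - p)) *
        (T ^ (p - 1) * (ENNReal.ofReal A * T) ^ (1 - (p - 1))) := by
        gcongr
        exact hholder.trans (by gcongr)
    _ = ENNReal.ofReal (p - 1) * (T ^ (p - 1) * T ^ (1 - (p - 1))) := by
        rw [ENNReal.mul_rpow_of_nonneg _ _ hr1', ← hconst]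
        ring
    _ = ENNReal.ofReal (p - 1) * T := by
        rw [← ENNReal.rpow_add_of_nonneg _ _ hr0.le hr1', add_sub_cancel, ENNReal.rpow_one]
    _ ≤ _ := ofReal_mul_tsum_ancestorSum_le_lintegral hn σ P g hr0 hr1

/-- Corollary 5.4 of the paper, case `1 < p ≤ 2`. -/
theorem stmt8 (n : ℕ) (hn : 2 ≤ n) (p : ℝ) (hp1 : 1 < p) (hp2 : p ≤ 2) (A : ℝ) (hA : 0 < A) :
    ∃ C : ℝ, 0 < C ∧
      ∀ (σt : Measure (EuclideanSpace ℝ (Fin n))), DiscCarlE p σt A →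
        ∀ (lam : DyadicCube n → ℝ≥0∞) (P : DyadicCube n),
          ENNReal.ofReal C *
              ∑' Q : {Q : DyadicCube n // Q.set ⊆ P.set},
                ENNReal.ofReal (cQ p Q.1) * σt Q.1.set ^ (1 / (p - 1)) * lam Q.1
          ≤ ∫⁻ x in P.set,
              (∑' Q : {Q : DyadicCube n // x ∈ Q.set ∧ Q.set ⊆ P.set},
                  ENNReal.ofReal (cQ p Q.1) * lam Q.1 ^ (1 / (p - 1))) ^ (p - 1) ∂σt := by
  have hn0 : 0 < n := by omega
  refine ⟨(p - 1) / A ^ (2 - p), div_pos (by linarith) (Real.rpow_pos_of_pos hA _),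
    fun σ hσ lam P => ?_⟩
  -- truncate `lam` at height `m` and let `m → ∞`
  have hmono : Monotone fun (m : ℕ) (Q : {Q : DyadicCube n // Q.set ⊆ P.set}) =>
      ENNReal.ofReal (cQ p Q.1) * σ Q.1.set ^ (1 / (p - 1)) * (lam Q.1 ⊓ m) :=
    fun i j hij Q => by dsimp only; gcongr
  calc _ = ⨆ m : ℕ, ENNReal.ofReal ((p - 1) / A ^ (2 - p)) *
        ∑' Q : {Q : DyadicCube n // Q.set ⊆ P.set},
          ENNReal.ofReal (cQ p Q.1) * σ Q.1.set ^ (1 / (p - 1)) * (lam Q.1 ⊓ m) := by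
        simp only [← ENNReal.mul_iSup, ← ENNReal.tsum_iSup_eq_iSup_tsum hmono, ← inf_iSup_eq,
          ENNReal.iSup_natCast, inf_top_eq]
    _ ≤ _ := iSup_le fun m => (ofReal_mul_tsum_le_lintegral_of_ne_top hn0 hp1 hp2 hA
        (hσ.tsum_le_measure_set hp1)
        (fun Q => ne_top_of_le_ne_top (ENNReal.natCast_ne_top m) inf_le_right) P).trans
        (lintegral_mono fun x => by gcongr; exact inf_le_left)
end
end

section
/- Let n ≥ 2, 1 < s < ∞ and 0 < α < n/s. Let σ be a nonnegative Borel measure on ℝ^n satisfying σ(B(x,r)) ≤ C · r^{n−αs} for all balls B(x,r), for some constant C > 0. Then there exists a constant C' = C'(n, α, s, C) > 0 such that for all x ∈ ℝ^n, all t > 0, and all y ∈ B(x,t): | ∫_t^∞ [ (σ(B(x,r))/r^{n−αs})^{1/(s−1)} − (σ(B(y,r))/r^{n−αs})^{1/(s−1)} ] dr/r | ≤ C'. -/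
/-!
Write `ν r = σ(B(x,r))`, `μ r = σ(B(y,r))` and `β = n - αs`. Since `|x - y| < t`, the balls are
nested: `μ (r - t) ≤ ν r ≤ μ (r + t)`, so `|ν r - μ r|` is at most `D r = μ (r + t) - μ (r - t)`,
whose integral over `[A, 2A]` is at most `2t μ (2A + t) ≲ t A^β`. As `a ↦ a^p` (`p = 1/(s-1)`) is
Hölder of exponent `q = min p 1` on `[0, C]`, the integrand on the dyadic block `[A, 2A)` is
`≲ A^(-βq-1) D(r)^q`, and concavity of `d ↦ d^q` turns the bound on `∫ D` into a bound
`≲ (t/A)^q` for the block. Summing over `A = 2^k t` gives a convergent geometric series.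
-/

open MeasureTheory Metric Set ENNReal

namespace Real

theorem rpow_le_rpow_add_rpow_sub_one_mul {q d ε : ℝ} (hq0 : 0 ≤ q) (hq1 : q ≤ 1) (hd : 0 ≤ d)
    (hε : 0 < ε) : d ^ q ≤ ε ^ q + ε ^ (q - 1) * d := by
  rcases le_or_gt d ε with hdε | hεd
  · have := rpow_le_rpow hd hdε hq0
    nlinarith [rpow_nonneg hε.le (q - 1)]
  · have hd0 : 0 < d := hε.trans hεd
    calc d ^ q = d ^ (q - 1) * d := by rw [← rpow_add_one hd0.ne', sub_add_cancel]
      _ ≤ ε ^ (q - 1) * d :=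
        mul_le_mul_of_nonneg_right (rpow_le_rpow_of_nonpos hε hεd.le (by linarith)) hd
      _ ≤ ε ^ q + ε ^ (q - 1) * d := le_add_of_nonneg_left (rpow_nonneg hε.le q)

theorem abs_rpow_sub_rpow_le_abs_sub_rpow {p a b : ℝ} (hp0 : 0 ≤ p) (hp1 : p ≤ 1) (ha : 0 ≤ a)
    (hb : 0 ≤ b) : |a ^ p - b ^ p| ≤ |a - b| ^ p := by
  wlog hba : b ≤ a generalizing a b
  · rw [abs_sub_comm, abs_sub_comm a]
    exact this hb ha (le_of_not_ge hba)
  have hsub := rpow_add_le_add_rpow (sub_nonneg.2 hba) hb hp0 hp1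
  rw [sub_add_cancel] at hsub
  rw [abs_of_nonneg (sub_nonneg.2 (rpow_le_rpow hb hba hp0)), abs_of_nonneg (sub_nonneg.2 hba)]
  linarith

theorem abs_rpow_sub_rpow_le_mul_abs_sub {p a b C : ℝ} (hp : 1 ≤ p) (ha : a ∈ Icc 0 C)
    (hb : b ∈ Icc 0 C) : |a ^ p - b ^ p| ≤ p * C ^ (p - 1) * |a - b| := by
  have hderiv : ∀ z ∈ Icc 0 C,
      HasDerivWithinAt (fun x : ℝ => x ^ p) (p * z ^ (p - 1)) (Icc 0 C) z := fun z _ =>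
    (hasDerivAt_rpow_const (Or.inr hp)).hasDerivWithinAt
  have hbound : ∀ z ∈ Icc 0 C, ‖p * z ^ (p - 1)‖ ≤ p * C ^ (p - 1) := fun z hz => by
    rw [norm_of_nonneg (by have := rpow_nonneg hz.1 (p - 1); positivity)]
    exact mul_le_mul_of_nonneg_left (rpow_le_rpow hz.1 hz.2 (by linarith)) (by linarith)
  simpa only [norm_eq_abs] using
    (convex_Icc 0 C).norm_image_sub_le_of_norm_hasDerivWithin_le hderiv hbound hb ha

theorem abs_rpow_sub_rpow_le_mul_abs_sub_rpow_min {p a b C : ℝ} (hp : 0 < p) (ha : a ∈ Icc 0 C)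
    (hb : b ∈ Icc 0 C) : |a ^ p - b ^ p| ≤ max 1 (p * C ^ (p - 1)) * |a - b| ^ min p 1 := by
  rcases le_total p 1 with hp1 | hp1
  · rw [min_eq_left hp1]
    exact (abs_rpow_sub_rpow_le_abs_sub_rpow hp.le hp1 ha.1 hb.1).trans
      (le_mul_of_one_le_left (by positivity) (le_max_left _ _))
  · rw [min_eq_right hp1, rpow_one]
    exact (abs_rpow_sub_rpow_le_mul_abs_sub hp1 ha hb).trans
      (by gcongr; exact le_max_right _ _)

end Real

theorem setLIntegral_ofReal_rpow_le {X : Type*} [MeasurableSpace X] {μ : Measure X} {s : Set X}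
    {f : X → ℝ} {q ε : ℝ} (hq0 : 0 ≤ q) (hq1 : q ≤ 1) (hε : 0 < ε) (hs : MeasurableSet s)
    (hμs : μ s ≠ ∞) (hf : IntegrableOn f s μ) (hf0 : ∀ x ∈ s, 0 ≤ f x)
    (hfε : ∫ x in s, f x ∂μ ≤ ε * μ.real s) :
    ∫⁻ x in s, ENNReal.ofReal (f x ^ q) ∂μ ≤ ENNReal.ofReal (2 * ε ^ q * μ.real s) := by
  have hg : IntegrableOn (fun x => ε ^ q + ε ^ (q - 1) * f x) s μ :=
    (integrableOn_const hμs).add (hf.const_mul _)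
  calc ∫⁻ x in s, ENNReal.ofReal (f x ^ q) ∂μ
      ≤ ∫⁻ x in s, ENNReal.ofReal (ε ^ q + ε ^ (q - 1) * f x) ∂μ :=
        setLIntegral_mono' hs fun x hx => ofReal_le_ofReal
          (Real.rpow_le_rpow_add_rpow_sub_one_mul hq0 hq1 (hf0 x hx) hε)
    _ = ENNReal.ofReal (ε ^ q * μ.real s + ε ^ (q - 1) * ∫ x in s, f x ∂μ) := by
        rw [← ofReal_integral_eq_lintegral_ofReal hg,
          integral_add (integrableOn_const hμs).integrable (hf.const_mul _), setIntegral_const, integral_const_mul, smul_eq_mul, mul_comm]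
        filter_upwards [ae_restrict_mem hs] with x hx
        have := hf0 x hx
        positivity
    _ ≤ ENNReal.ofReal (2 * ε ^ q * μ.real s) := by
        refine ofReal_le_ofReal ?_
        have hεq : ε ^ (q - 1) * ε = ε ^ q := by
          rw [← Real.rpow_add_one hε.ne', sub_add_cancel]
        have := mul_le_mul_of_nonneg_left hfε (Real.rpow_nonneg hε.le (q - 1))
        rw [← mul_assoc, hεq] at this
        linarith

theorem Monotone.intervalIntegral_comp_add_sub_comp_sub_le {f : ℝ → ℝ} (hf : Monotone f)
    (a b : ℝ) {t : ℝ} (ht : 0 ≤ t) :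
    ∫ r in a..b, (f (r + t) - f (r - t)) ≤ 2 * t * (f (b + t) - f (a - t)) := by
  have hint : ∀ c d : ℝ, IntervalIntegrable f volume c d := fun _ _ => hf.intervalIntegrable
  have hupper : ∫ r in (b - t)..(b + t), f r ≤ 2 * t * f (b + t) := by
    have := intervalIntegral.integral_mono_on (a := b - t) (b := b + t) (g := fun _ => f (b + t))
      (by linarith) (hint _ _) intervalIntegrable_const fun r hr => hf hr.2
    rwa [intervalIntegral.integral_const, smul_eq_mul, show b + t - (b - t) = 2 * t by ring]
      at this
  have hlower : 2 * t * f (a - t) ≤ ∫ r in (a - t)..(a + t), f r := by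
    have := intervalIntegral.integral_mono_on (a := a - t) (b := a + t) (f := fun _ => f (a - t))
      (by linarith) intervalIntegrable_const (hint _ _) fun r hr => hf hr.1
    rwa [intervalIntegral.integral_const, smul_eq_mul, show a + t - (a - t) = 2 * t by ring]
      at this
  have hshift : ∀ c : ℝ, IntervalIntegrable (fun r => f (r + c)) volume a b := fun c =>
    (hf.comp fun _ _ h => add_le_add_left h c).intervalIntegrable
  rw [intervalIntegral.integral_sub (hshift t) (by simpa only [sub_eq_add_neg] using hshift (-t)),
    intervalIntegral.integral_comp_add_right, intervalIntegral.integral_comp_sub_right,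
    ← intervalIntegral.integral_add_adjacent_intervals (hint (a + t) (b - t)) (hint (b - t) _),
    ← intervalIntegral.integral_add_adjacent_intervals (hint (a - t) (a + t)) (hint (a + t) _)]
  linarith

theorem Ioi_subset_iUnion_Ico_two_pow_mul {t : ℝ} (ht : 0 < t) :
    Ioi t ⊆ ⋃ k : ℕ, Ico (2 ^ k * t) (2 ^ (k + 1) * t) := fun r hr => by
  obtain ⟨k, hk⟩ := exists_nat_pow_near ((one_le_div ht).2 (le_of_lt hr)) one_lt_two
  rw [le_div_iff₀ ht, div_lt_iff₀ ht] at hk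
  exact mem_iUnion.2 ⟨k, hk⟩

theorem lintegral_Ioi_le_of_forall_Ico_two_pow_le {f : ℝ → ℝ≥0∞} {t : ℝ} (ht : 0 < t)
    {K u : ℝ≥0∞} (hf : ∀ k : ℕ, ∫⁻ r in Ico (2 ^ k * t) (2 ^ (k + 1) * t), f r ≤ K * u ^ k) :
    ∫⁻ r in Ioi t, f r ≤ K * (1 - u)⁻¹ :=
  calc ∫⁻ r in Ioi t, f r
      ≤ ∫⁻ r in ⋃ k : ℕ, Ico (2 ^ k * t) (2 ^ (k + 1) * t), f r :=
        lintegral_mono_set (Ioi_subset_iUnion_Ico_two_pow_mul ht)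
    _ ≤ ∑' k : ℕ, ∫⁻ r in Ico (2 ^ k * t) (2 ^ (k + 1) * t), f r := lintegral_iUnion_le _ _
    _ ≤ ∑' k : ℕ, K * u ^ k := ENNReal.tsum_le_tsum hf
    _ = K * (1 - u)⁻¹ := by rw [ENNReal.tsum_mul_left, ENNReal.tsum_geometric]

section BallMeasure

variable {X : Type*} [PseudoMetricSpace X] [MeasurableSpace X] {σ : Measure X}

theorem monotone_measureReal_ball (hσ : ∀ x r, σ (ball x r) ≠ ∞) (x : X) :
    Monotone fun r => σ.real (ball x r) := fun _ _ h =>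
  measureReal_mono (ball_subset_ball h) (hσ x _)

theorem measureReal_ball_mem_Icc_of_dist_lt (hσ : ∀ x r, σ (ball x r) ≠ ∞) {x y : X} {t : ℝ}
    (hxy : dist x y < t) (r : ℝ) :
    σ.real (ball x r) ∈ Icc (σ.real (ball y (r - t))) (σ.real (ball y (r + t))) :=
  ⟨measureReal_mono (ball_subset_ball' (by rw [dist_comm]; linarith)) (hσ x r),
    measureReal_mono (ball_subset_ball' (by linarith)) (hσ y _)⟩

end BallMeasure

section Tail

variable {β p q M C t : ℝ} {μ ν : ℝ → ℝ}

theorem norm_rpow_div_sub_rpow_div_mul_one_div_le {A r a b : ℝ} (hβ : 0 ≤ β) (hq : 0 ≤ q)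
    (hM : ∀ a b, a ∈ Icc 0 C → b ∈ Icc 0 C → |a ^ p - b ^ p| ≤ M * |a - b| ^ q) (hM0 : 0 ≤ M)
    (hA : 0 < A) (hAr : A ≤ r) (ha : a ∈ Icc 0 (C * r ^ β)) (hb : b ∈ Icc 0 (C * r ^ β)) :
    ‖((a / r ^ β) ^ p - (b / r ^ β) ^ p) * (1 / r)‖ ≤ M / (A ^ (β * q) * A) * |a - b| ^ q := by
  have hr : 0 < r := hA.trans_le hAr
  have hrβ : 0 < r ^ β := Real.rpow_pos_of_pos hr β
  have hscale : ∀ c ∈ Icc 0 (C * r ^ β), c / r ^ β ∈ Icc 0 C := fun c hc =>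
    ⟨div_nonneg hc.1 hrβ.le, (div_le_iff₀ hrβ).2 hc.2⟩
  calc ‖((a / r ^ β) ^ p - (b / r ^ β) ^ p) * (1 / r)‖
      = |(a / r ^ β) ^ p - (b / r ^ β) ^ p| / r := by
        rw [Real.norm_eq_abs, abs_mul, abs_of_pos (one_div_pos.2 hr), mul_one_div]
    _ ≤ M * |a / r ^ β - b / r ^ β| ^ q / r := by
        gcongr; exact hM _ _ (hscale a ha) (hscale b hb)
    _ = M * |a - b| ^ q / (r ^ (β * q) * r) := by
        rw [← sub_div, abs_div, abs_of_pos hrβ, Real.div_rpow (abs_nonneg _) hrβ.le,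
          ← Real.rpow_mul hr.le]
        field_simp
    _ ≤ M * |a - b| ^ q / (A ^ (β * q) * A) := by gcongr
    _ = M / (A ^ (β * q) * A) * |a - b| ^ q := by ring

theorem integral_Ico_comp_add_sub_comp_sub_le (hβ : 0 ≤ β) (hμ : Monotone μ)
    (hμ0 : ∀ r, 0 ≤ μ r) (hμC : ∀ r, 0 < r → μ r ≤ C * r ^ β) (ht : 0 < t) {A : ℝ}
    (htA : t ≤ A) :
    ∫ r in Ico A (2 * A), (μ (r + t) - μ (r - t)) ≤ 2 * C * 3 ^ β * t * A ^ β := by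
  have hA : 0 < A := ht.trans_le htA
  have hC : 0 ≤ C := by simpa using (hμ0 1).trans (hμC 1 one_pos)
  rw [integral_Ico_eq_integral_Ioc, ← intervalIntegral.integral_of_le (by linarith)]
  calc ∫ r in A..2 * A, (μ (r + t) - μ (r - t))
      ≤ 2 * t * (μ (2 * A + t) - μ (A - t)) :=
        hμ.intervalIntegral_comp_add_sub_comp_sub_le _ _ ht.le
    _ ≤ 2 * t * (C * (3 * A) ^ β) := by
        gcongr
        calc μ (2 * A + t) - μ (A - t) ≤ μ (2 * A + t) := sub_le_self _ (hμ0 _)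
          _ ≤ C * (2 * A + t) ^ β := hμC _ (by linarith)
          _ ≤ C * (3 * A) ^ β := by gcongr; linarith
    _ = 2 * C * 3 ^ β * t * A ^ β := by rw [Real.mul_rpow (by norm_num) hA.le]; ring

theorem lintegral_Ico_norm_rpow_div_sub_le (hβ : 0 ≤ β) (hq0 : 0 ≤ q) (hq1 : q ≤ 1)
    (hM : ∀ a b, a ∈ Icc 0 C → b ∈ Icc 0 C → |a ^ p - b ^ p| ≤ M * |a - b| ^ q) (hM0 : 0 ≤ M)
    (hC : 0 < C) (hμ : Monotone μ) (hμ0 : ∀ r, 0 ≤ μ r) (hμC : ∀ r, 0 < r → μ r ≤ C * r ^ β)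
    (hνC : ∀ r, 0 < r → ν r ≤ C * r ^ β) (hνμ : ∀ r, ν r ∈ Icc (μ (r - t)) (μ (r + t)))
    (ht : 0 < t) {A : ℝ} (htA : t ≤ A) :
    ∫⁻ r in Ico A (2 * A), ENNReal.ofReal ‖((ν r / r ^ β) ^ p - (μ r / r ^ β) ^ p) * (1 / r)‖
      ≤ ENNReal.ofReal (2 * M * (2 * C * 3 ^ β) ^ q * (t / A) ^ q) := by
  have hA : 0 < A := ht.trans_le htA
  set D : ℝ → ℝ := fun r => μ (r + t) - μ (r - t)
  set W : ℝ := M / (A ^ (β * q) * A)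
  set ε : ℝ := 2 * C * 3 ^ β * (t / A) * A ^ β
  have hD0 : ∀ r, 0 ≤ D r := fun r => sub_nonneg.2 (hμ (by linarith))
  have hνμD : ∀ r, |ν r - μ r| ≤ D r := fun r => abs_sub_le_iff.2
    ⟨by linarith [(hνμ r).2, hμ (by linarith : r - t ≤ r)],
      by linarith [(hνμ r).1, hμ (by linarith : r ≤ r + t)]⟩
  have hDint : IntegrableOn D (Ico A (2 * A)) := by
    have hshift : ∀ c : ℝ, IntegrableOn (fun r => μ (r + c)) (Icc A (2 * A)) := fun c =>
      (hμ.comp fun _ _ h => add_le_add_left h c).locallyIntegrable.integrableOn_isCompact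
        isCompact_Icc
    exact ((hshift t).sub (by simpa only [sub_eq_add_neg] using hshift (-t))).mono_set
      Ico_subset_Icc_self
  have hDε : ∫ r in Ico A (2 * A), D r ≤ ε * volume.real (Ico A (2 * A)) := by
    rw [Real.volume_real_Ico_of_le (by linarith), show 2 * A - A = A by ring,
      show ε * A = 2 * C * 3 ^ β * t * A ^ β by simp only [ε]; field_simp]
    exact integral_Ico_comp_add_sub_comp_sub_le hβ hμ hμ0 hμC ht htA
  have hpt : ∀ r ∈ Ico A (2 * A), ENNReal.ofReal ‖((ν r / r ^ β) ^ p - (μ r / r ^ β) ^ p) * (1 / r)‖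
      ≤ ENNReal.ofReal (W * D r ^ q) := fun r hr => by
    have hr0 : 0 < r := hA.trans_le hr.1
    refine ofReal_le_ofReal ((norm_rpow_div_sub_rpow_div_mul_one_div_le hβ hq0 hM hM0 hA hr.1
      ⟨(hμ0 _).trans (hνμ r).1, hνC r hr0⟩ ⟨hμ0 r, hμC r hr0⟩).trans ?_)
    gcongr
    exact hνμD r
  calc ∫⁻ r in Ico A (2 * A), ENNReal.ofReal ‖((ν r / r ^ β) ^ p - (μ r / r ^ β) ^ p) * (1 / r)‖
      ≤ ∫⁻ r in Ico A (2 * A), ENNReal.ofReal W * ENNReal.ofReal (D r ^ q) := by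
        simp_rw [← ofReal_mul (by positivity : 0 ≤ W)]
        exact setLIntegral_mono' measurableSet_Ico hpt
    _ = ENNReal.ofReal W * ∫⁻ r in Ico A (2 * A), ENNReal.ofReal (D r ^ q) :=
        lintegral_const_mul' _ _ ofReal_ne_top
    _ ≤ ENNReal.ofReal W * ENNReal.ofReal (2 * ε ^ q * volume.real (Ico A (2 * A))) := by
        gcongr
        exact setLIntegral_ofReal_rpow_le hq0 hq1 (by positivity) measurableSet_Ico
          measure_Ico_lt_top.ne hDint (fun r _ => hD0 r) hDε
    _ = ENNReal.ofReal (2 * M * (2 * C * 3 ^ β) ^ q * (t / A) ^ q) := by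
        rw [← ofReal_mul (by positivity), Real.volume_real_Ico_of_le (by linarith),
          Real.mul_rpow (by positivity) (by positivity),
          Real.mul_rpow (by positivity) (by positivity), ← Real.rpow_mul hA.le]
        congr 1
        simp only [W]
        field_simp
        ring

theorem exists_lintegral_Ioi_norm_rpow_div_sub_le (hβ : 0 ≤ β) (hp : 0 < p) (hC : 0 < C) :
    ∃ K > 0, ∀ ⦃t : ℝ⦄ ⦃μ ν : ℝ → ℝ⦄, 0 < t → Monotone μ → (∀ r, 0 ≤ μ r) →
      (∀ r, 0 < r → μ r ≤ C * r ^ β) → (∀ r, 0 < r → ν r ≤ C * r ^ β) →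
      (∀ r, ν r ∈ Icc (μ (r - t)) (μ (r + t))) →
      ∫⁻ r in Ioi t, ENNReal.ofReal ‖((ν r / r ^ β) ^ p - (μ r / r ^ β) ^ p) * (1 / r)‖
        ≤ ENNReal.ofReal K := by
  set q := min p 1
  set M := max 1 (p * C ^ (p - 1))
  set K := 2 * M * (2 * C * 3 ^ β) ^ q
  set u : ℝ := 2⁻¹ ^ q
  have hq0 : 0 < q := lt_min hp one_pos
  have hM0 : 0 < M := lt_max_of_lt_left one_pos
  have hK0 : 0 < K := by positivity
  have hu1 : u < 1 := Real.rpow_lt_one (by norm_num) (by norm_num) hq0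
  refine ⟨K / (1 - u), div_pos hK0 (sub_pos.2 hu1),
    fun t μ ν ht hμ hμ0 hμC hνC hνμ => ?_⟩
  have hblock (k : ℕ) : ∫⁻ r in Ico (2 ^ k * t) (2 ^ (k + 1) * t),
      ENNReal.ofReal ‖((ν r / r ^ β) ^ p - (μ r / r ^ β) ^ p) * (1 / r)‖
        ≤ ENNReal.ofReal K * ENNReal.ofReal u ^ k := by
    rw [pow_succ, mul_comm _ (2 : ℝ), mul_assoc]
    refine (lintegral_Ico_norm_rpow_div_sub_le hβ hq0.le (min_le_right _ _)
      (fun _ _ => Real.abs_rpow_sub_rpow_le_mul_abs_sub_rpow_min hp) hM0.le hC hμ hμ0 hμC hνC hνμ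
      ht (le_mul_of_one_le_left ht.le (one_le_pow₀ one_le_two))).trans_eq ?_
    rw [← ofReal_pow (by positivity), ← ofReal_mul (by positivity),
      div_mul_cancel_right₀ ht.ne', ← inv_pow, Real.rpow_pow_comm (by norm_num)]
  refine (lintegral_Ioi_le_of_forall_Ico_two_pow_le ht hblock).trans_eq ?_
  rw [div_eq_mul_inv, ofReal_mul (p := K) hK0.le, ofReal_inv_of_pos (sub_pos.2 hu1),
    ofReal_sub _ (by positivity), ofReal_one]

end Tail

theorem stmt11_general (n : ℕ) (s α : ℝ) (hs : 1 < s) (hαs : α < n / s)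
    (σ : Measure (EuclideanSpace ℝ (Fin n))) (C : ℝ) (hC : 0 < C)
    (hball : ∀ (x : EuclideanSpace ℝ (Fin n)) (r : ℝ), 0 < r →
      σ (ball x r) ≤ ENNReal.ofReal (C * r ^ ((n : ℝ) - α * s))) :
    ∃ C' : ℝ, 0 < C' ∧
      ∀ (x y : EuclideanSpace ℝ (Fin n)) (t : ℝ), 0 < t → y ∈ ball x t →
        |∫ r in Ioi t,
            (((σ (ball x r)).toReal / r ^ ((n : ℝ) - α * s)) ^ (1 / (s - 1)) -
              ((σ (ball y r)).toReal / r ^ ((n : ℝ) - α * s)) ^ (1 / (s - 1))) * (1 / r)|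
          ≤ C' := by
  have hβ : 0 ≤ (n : ℝ) - α * s := by
    have := (lt_div_iff₀ (by linarith)).1 hαs
    linarith
  have hfin : ∀ x r, σ (ball x r) ≠ ∞ := fun x r => by
    rcases le_or_gt r 0 with hr | hr
    · simp [ball_eq_empty.2 hr]
    · exact ne_top_of_le_ne_top ofReal_ne_top (hball x r hr)
  have hbound : ∀ x r, 0 < r → σ.real (ball x r) ≤ C * r ^ ((n : ℝ) - α * s) := fun x r hr =>
    toReal_le_of_le_ofReal (by positivity) (hball x r hr)
  obtain ⟨K, hK, htail⟩ :=
    exists_lintegral_Ioi_norm_rpow_div_sub_le hβ (one_div_pos.2 (sub_pos.2 hs)) hC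
  refine ⟨K, hK, fun x y t ht hy => ?_⟩
  rw [← Real.norm_eq_abs]
  refine (norm_integral_le_lintegral_norm _).trans (toReal_le_of_le_ofReal hK.le ?_)
  exact htail ht (monotone_measureReal_ball hfin y) (fun r => measureReal_nonneg)
    (hbound y) (hbound x) (measureReal_ball_mem_Icc_of_dist_lt hfin (mem_ball'.1 hy))

/-- Appendix A of the paper: a tail estimate for nonlinear potentials. -/
theorem stmt11 (n : ℕ) (hn : 2 ≤ n) (s α : ℝ) (hs : 1 < s) (hα : 0 < α) (hαs : α < n / s)
    (σ : Measure (EuclideanSpace ℝ (Fin n))) (C : ℝ) (hC : 0 < C)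
    (hball : ∀ (x : EuclideanSpace ℝ (Fin n)) (r : ℝ), 0 < r →
      σ (ball x r) ≤ ENNReal.ofReal (C * r ^ ((n : ℝ) - α * s))) :
    ∃ C' : ℝ, 0 < C' ∧
      ∀ (x y : EuclideanSpace ℝ (Fin n)) (t : ℝ), 0 < t → y ∈ ball x t →
        |∫ r in Ioi t,
            (((σ (ball x r)).toReal / r ^ ((n : ℝ) - α * s)) ^ (1 / (s - 1)) -
              ((σ (ball y r)).toReal / r ^ ((n : ℝ) - α * s)) ^ (1 / (s - 1))) * (1 / r)|
          ≤ C' :=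
  stmt11_general n s α hs hαs σ C hC hball
end

section
/- Let {λ_j}_{j≥0} be a nonnegative sequence with 0 ≤ λ_j ≤ 1 for all j and Σ_{j=0}^∞ λ_j < ∞. Then Σ_{j=0}^∞ λ_j · exp( Σ_{k=j}^∞ λ_k ) ≤ 2 · ( exp( Σ_{j=0}^∞ λ_j ) − 1 ). -/
lemma key_aux (a : ℝ) (h0 : 0 ≤ a) (h1 : a ≤ 1) : a * Real.exp a ≤ 2 * (Real.exp a - 1) := by
  have habs : |a| ≤ 1 := by rwa [abs_of_nonneg h0]
  have hb := Real.exp_bound habs (n := 4) (by norm_num)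
  rw [abs_le] at hb
  simp [Finset.sum_range_succ, Nat.factorial, abs_of_nonneg h0] at hb
  nlinarith [hb.1, hb.2, sq_nonneg a, pow_nonneg h0 3, pow_nonneg h0 4, pow_nonneg h0 5]

/-- summation by parts, inequality (4.24) of the paper:
if `0 ≤ λ_j ≤ 1` and `Σ λ_j < ∞`, then
`Σ_j λ_j e^{Σ_{k ≥ j} λ_k} ≤ 2 (e^{Σ_j λ_j} − 1)`. -/
theorem stmt15 (lam : ℕ → ℝ) (h0 : ∀ j, 0 ≤ lam j) (h1 : ∀ j, lam j ≤ 1)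
    (hsum : Summable lam) :
    (∑' j : ℕ, lam j * Real.exp (∑' k : {k : ℕ // j ≤ k}, lam k))
      ≤ 2 * (Real.exp (∑' j : ℕ, lam j) - 1) := by
  set T : ℕ → ℝ := fun j => ∑' k : {k : ℕ // j ≤ k}, lam k with hT
  have hTeq : ∀ j, T j = ∑' n : ℕ, lam (n + j) := by
    intro j
    exact (Equiv.tsum_eq
      ⟨fun n => ⟨n + j, Nat.le_add_left j n⟩, fun k => k.1 - j,
        fun n => by simp, fun k => by ext; exact Nat.sub_add_cancel k.2⟩
      (fun k : {k : ℕ // j ≤ k} => lam k.1)).symm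
  have hsumj : ∀ j, Summable (fun n => lam (n + j)) := fun j =>
    (summable_nat_add_iff j).mpr hsum
  have hstep : ∀ j, T j = lam j + T (j + 1) := by
    intro j
    rw [hTeq j, hTeq (j + 1), Summable.tsum_eq_zero_add (hsumj j)]
    simp only [Nat.zero_add]
    congr 1
    apply tsum_congr
    intro n
    congr 1
    omega
  have hTnn : ∀ j, 0 ≤ T j := fun j => tsum_nonneg fun k => h0 k
  have hT0 : T 0 = ∑' j, lam j := by
    rw [hTeq 0]; simp
  -- pointwise estimate
  have hpt : ∀ j, lam j * Real.exp (T j) ≤ 2 * (Real.exp (T j) - Real.exp (T (j + 1))) := by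
    intro j
    rw [hstep j, Real.exp_add]
    have hk := key_aux (lam j) (h0 j) (h1 j)
    have he : 0 < Real.exp (T (j + 1)) := Real.exp_pos _
    nlinarith [hk, he]
  -- partial sums
  have hps : ∀ n, ∑ j ∈ Finset.range n, lam j * Real.exp (T j)
      ≤ 2 * (Real.exp (∑' j, lam j) - 1) := by
    intro n
    calc ∑ j ∈ Finset.range n, lam j * Real.exp (T j)
        ≤ ∑ j ∈ Finset.range n, 2 * (Real.exp (T j) - Real.exp (T (j + 1))) :=
          Finset.sum_le_sum fun j _ => hpt j
      _ = 2 * (Real.exp (T 0) - Real.exp (T n)) := by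
          rw [← Finset.mul_sum, Finset.sum_range_sub' (fun j => Real.exp (T j))]
      _ ≤ 2 * (Real.exp (∑' j, lam j) - 1) := by
          rw [hT0]
          have : (1 : ℝ) ≤ Real.exp (T n) := by
            rw [← Real.exp_zero]; exact Real.exp_le_exp.mpr (hTnn n)
          linarith
  exact Real.tsum_le_of_sum_range_le
    (fun j => mul_nonneg (h0 j) (Real.exp_pos _).le) hps
end

section
/- Let {λ_j}_{j≥0} be a nonnegative summable sequence and let m ≥ 1 be an integer. Then (1/m) · ( Σ_{j=0}^∞ λ_j )^m ≤ Σ_{j=0}^∞ λ_j · ( Σ_{k=j}^∞ λ_k )^{m−1}. -/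
lemma pow_sub_pow_le_aux (a b : ℝ) (hb : 0 ≤ b) (hba : b ≤ a) :
    ∀ n : ℕ, a ^ (n + 1) - b ^ (n + 1) ≤ (n + 1 : ℝ) * (a - b) * a ^ n := by
  have ha : 0 ≤ a := hb.trans hba
  intro n
  induction n with
  | zero => simp
  | succ n ih =>
    have hpow : b ^ (n + 1) ≤ a ^ (n + 1) := pow_le_pow_left₀ hb hba _
    have h1 : a ^ (n + 2) - b ^ (n + 2)
        = a * (a ^ (n + 1) - b ^ (n + 1)) + (a - b) * b ^ (n + 1) := by ring
    have h2 : a * (a ^ (n + 1) - b ^ (n + 1)) ≤ a * ((n + 1 : ℝ) * (a - b) * a ^ n) :=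
      mul_le_mul_of_nonneg_left ih ha
    have h3 : (a - b) * b ^ (n + 1) ≤ (a - b) * a ^ (n + 1) :=
      mul_le_mul_of_nonneg_left hpow (by linarith)
    have h4 : a * ((n + 1 : ℝ) * (a - b) * a ^ n) = (n + 1 : ℝ) * (a - b) * a ^ (n + 1) := by
      ring
    push_cast
    nlinarith [h1, h2, h3, h4]

/-- summation by parts, inequality (5.17) of the paper:
for a nonnegative summable sequence `{λ_j}` and `m ≥ 1`,
`(1/m) (Σ_j λ_j)^m ≤ Σ_j λ_j (Σ_{k ≥ j} λ_k)^{m−1}`. -/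
theorem stmt16 (lam : ℕ → ℝ) (h0 : ∀ j, 0 ≤ lam j) (hsum : Summable lam)
    (m : ℕ) (hm : 1 ≤ m) :
    (1 / (m : ℝ)) * (∑' j : ℕ, lam j) ^ m
      ≤ ∑' j : ℕ, lam j * (∑' k : {k : ℕ // j ≤ k}, lam k) ^ (m - 1) := by
  set T : ℕ → ℝ := fun j => ∑' k : {k : ℕ // j ≤ k}, lam k with hT
  -- T j as a shifted tsum
  have hTshift : ∀ j, T j = ∑' n : ℕ, lam (n + j) := by
    intro j
    let e : ℕ ≃ {k : ℕ // j ≤ k} :=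
      { toFun := fun n => ⟨n + j, Nat.le_add_left _ _⟩
        invFun := fun k => k.1 - j
        left_inv := fun n => by simp
        right_inv := fun k => by
          ext; simpa using Nat.sub_add_cancel k.2 }
    show ∑' k : {k : ℕ // j ≤ k}, lam k = _
    rw [← e.tsum_eq (fun k : {k : ℕ // j ≤ k} => lam k)]
    exact tsum_congr fun c => rfl
  have hTsummable : ∀ j, Summable fun n : ℕ => lam (n + j) := fun j =>
    (summable_nat_add_iff j).2 hsum
  have hTnonneg : ∀ j, 0 ≤ T j := by
    intro j; rw [hTshift]; exact tsum_nonneg fun n => h0 _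
  have hTrec : ∀ j, T j = lam j + T (j + 1) := by
    intro j
    rw [hTshift j, hTshift (j + 1)]
    rw [Summable.tsum_eq_zero_add (hTsummable j)]
    simp only [zero_add]
    congr 1
    apply tsum_congr
    intro n
    congr 1
    omega
  have hT0 : T 0 = ∑' j, lam j := by
    rw [hTshift]; simp
  have hTle : ∀ j, T j ≤ T 0 := by
    intro j
    induction j with
    | zero => exact le_refl _
    | succ j ih =>
      have := hTrec j
      have := h0 j
      linarith
  -- summability of the RHS series
  have hg : Summable fun j => lam j * T j ^ (m - 1) := by
    apply Summable.of_nonneg_of_le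
      (fun j => mul_nonneg (h0 j) (pow_nonneg (hTnonneg j) _))
      (fun j => mul_le_mul_of_nonneg_left
        (pow_le_pow_left₀ (hTnonneg j) (hTle j) _) (h0 j))
    exact hsum.mul_right _
  -- key termwise bound
  obtain ⟨n, rfl⟩ : ∃ n, m = n + 1 := ⟨m - 1, (Nat.succ_pred_eq_of_pos hm).symm⟩
  have key : ∀ j, T j ^ (n + 1) - T (j + 1) ^ (n + 1)
      ≤ (n + 1 : ℝ) * (lam j * T j ^ n) := by
    intro j
    have hba : T (j + 1) ≤ T j := by have := hTrec j; have := h0 j; linarith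
    have := pow_sub_pow_le_aux (T j) (T (j + 1)) (hTnonneg _) hba n
    have hd : T j - T (j + 1) = lam j := by have := hTrec j; linarith
    rw [hd] at this
    linarith [this]
  -- partial sums bound
  have hpart : ∀ N : ℕ, T 0 ^ (n + 1) - T N ^ (n + 1)
      ≤ (n + 1 : ℝ) * ∑' j, lam j * T j ^ n := by
    intro N
    have htel : ∑ j ∈ Finset.range N, (T j ^ (n + 1) - T (j + 1) ^ (n + 1))
        = T 0 ^ (n + 1) - T N ^ (n + 1) :=
      Finset.sum_range_sub' (fun j => T j ^ (n + 1)) N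
    have h1 : ∑ j ∈ Finset.range N, (T j ^ (n + 1) - T (j + 1) ^ (n + 1))
        ≤ ∑ j ∈ Finset.range N, (n + 1 : ℝ) * (lam j * T j ^ n) :=
      Finset.sum_le_sum fun j _ => key j
    have h2 : ∑ j ∈ Finset.range N, (lam j * T j ^ n) ≤ ∑' j, lam j * T j ^ n :=
      Summable.sum_le_tsum _ (fun j _ => mul_nonneg (h0 j) (pow_nonneg (hTnonneg j) _)) hg
    rw [← Finset.mul_sum] at h1
    have : (0:ℝ) ≤ (n + 1 : ℝ) := by positivity
    nlinarith [h1, h2, htel]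
  -- T N → 0
  have hT0lim : Filter.Tendsto T Filter.atTop (nhds 0) := by
    have hTeq : T = fun i => ∑' k : ℕ, lam (k + i) := funext fun j => hTshift j
    rw [hTeq]
    exact _root_.tendsto_sum_nat_add lam
  have hlim : Filter.Tendsto (fun N => T 0 ^ (n + 1) - T N ^ (n + 1))
      Filter.atTop (nhds (T 0 ^ (n + 1))) := by
    have h1 : Filter.Tendsto (fun N => T N ^ (n + 1)) Filter.atTop (nhds 0) := by
      simpa using hT0lim.pow (n + 1)
    simpa using (tendsto_const_nhds.sub h1)
  have hfin : T 0 ^ (n + 1) ≤ (n + 1 : ℝ) * ∑' j, lam j * T j ^ n :=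
    le_of_tendsto hlim (Filter.Eventually.of_forall hpart)
  have hrhs : (∑' j : ℕ, lam j * (∑' k : {k : ℕ // j ≤ k}, lam k) ^ (n + 1 - 1))
      = ∑' j, lam j * T j ^ n := by rfl
  rw [hrhs, ← hT0]
  have hmpos : (0:ℝ) < ((n + 1 : ℕ) : ℝ) := by positivity
  rw [div_mul_eq_mul_div, one_mul, div_le_iff₀ hmpos]
  push_cast at hfin ⊢
  linarith [hfin]
end
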